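/- arXiv:math/0509095 — 2 statements merged into one kernel-verified Lean document; each statement's English description precedes it below -/
import Mathlib

section
/- For every real number x ≥ 2, the Chebyshev function ψ and the prime counting function π satisfy ψ(x) ≤ π(x)·log(x) ≤ 2·ψ(x). -/
open Real

/-- The prime counting function for a real argument:
`primePi x` is the number of primes `p ≤ x`. -/
noncomputable def primePi (x : ℝ) : ℝ := Nat.primeCounting ⌊x⌋₊

/-- The second Chebyshev function `ψ(x) = ∑_{n ≤ x} Λ(n)`,
where `Λ` is the von Mangoldt function. -/
noncomputable def chebyshevPsi (x : ℝ) : ℝ :=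
  ∑ n ∈ Finset.Iic ⌊x⌋₊, ArithmeticFunction.vonMangoldt n

/-!
Write `N = ⌊x⌋₊`. Grouping prime powers by their prime, `ψ(x) = ∑_{p ≤ N} m_p log p` with
`m_p = Nat.log p N`, the largest `m` with `p ^ m ≤ x`. Hence
`m_p log p ≤ log x < (m_p + 1) log p`, and since `m_p ≥ 1` the right-hand side is at most
`2 m_p log p`. Summing over the `π(x)` primes `p ≤ x` gives both inequalities.
-/

open Finset Chebyshev

lemma chebyshevPsi_eq_psi (x : ℝ) : chebyshevPsi x = ψ x := by
  rw [chebyshevPsi, psi_eq_sum_Icc, Iic_eq_Icc, Nat.bot_eq_zero]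

lemma log_lt_succ_log_floor_mul_log {b : ℕ} (hb : 1 < b) {x : ℝ} (hx : 0 < x) :
    log x < (b.log ⌊x⌋₊ + 1) * log b := by
  have hlt : x < (b : ℝ) ^ (b.log ⌊x⌋₊ + 1) := calc
    x < ⌊x⌋₊ + 1 := Nat.lt_floor_add_one x
    _ ≤ (b : ℝ) ^ (b.log ⌊x⌋₊ + 1) := mod_cast Nat.lt_pow_succ_log_self hb ⌊x⌋₊
  calc log x < log ((b : ℝ) ^ (b.log ⌊x⌋₊ + 1)) := log_lt_log hx hlt
    _ = (b.log ⌊x⌋₊ + 1) * log b := by rw [log_pow]; push_cast; ring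

lemma log_le_two_mul_log_floor_mul_log {b : ℕ} (hb : 1 < b) {x : ℝ} (hbx : b ≤ ⌊x⌋₊) :
    log x ≤ 2 * (b.log ⌊x⌋₊ * log b) := by
  have hx : 0 < x := Nat.pos_of_floor_pos (by omega)
  have hlog : (1 : ℝ) ≤ b.log ⌊x⌋₊ := mod_cast Nat.log_pos hb hbx
  have hlogb : 0 ≤ log b := log_nonneg (mod_cast hb.le)
  nlinarith [log_lt_succ_log_floor_mul_log hb hx]

lemma primeCounting_mul_log_le_two_mul_psi (x : ℝ) :
    Nat.primeCounting ⌊x⌋₊ * log x ≤ 2 * ψ x := by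
  rw [psi_eq_psi_coe_floor, psi_eq_sum_mul_log_prime, mul_sum,
    ← Nat.primesLE_card_eq_primeCounting, ← nsmul_eq_mul, ← sum_const]
  gcongr with p hp
  exact log_le_two_mul_log_floor_mul_log (Nat.one_lt_of_mem_primesLE hp)
    (Nat.le_of_mem_primesLE hp)

theorem chebyshevPsi_le_primePi_mul_log_le_two_mul_general (x : ℝ) :
    chebyshevPsi x ≤ primePi x * Real.log x ∧
      primePi x * Real.log x ≤ 2 * chebyshevPsi x := by
  rw [chebyshevPsi_eq_psi, primePi]
  exact ⟨psi_le_primeCounting_mul_log' x, primeCounting_mul_log_le_two_mul_psi x⟩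

theorem chebyshevPsi_le_primePi_mul_log_le_two_mul (x : ℝ) (hx : 2 ≤ x) :
    chebyshevPsi x ≤ primePi x * Real.log x ∧
      primePi x * Real.log x ≤ 2 * chebyshevPsi x :=
  chebyshevPsi_le_primePi_mul_log_le_two_mul_general x
end

section
/- For every real number x ≥ 2846396, one has (x/log(x))·(1 + 1/log(x) + 2.51/(log(x))²) ≤ x/(log(x) − 1.08366). -/
/-!
Writing `L = log x`, the inequality is equivalent to `(L² + L + 2.51)(L - 1.08366) ≤ L³`, i.e. to
`0.08366 L² - 1.42634 L + 2.51 · 1.08366 ≥ 0`. The larger root of this quadratic is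
`≈ 14.86156397`, just below `log 2846396 ≈ 14.86156419`, so everything rests on a lower bound for
`log 2846396` accurate to about `10⁻⁷`. It comes from `2846396 = 2²¹ (1 + 187311/524288)`, a
nine-digit bound on `log 2`, and four terms of the series for `log (1 + a⁻¹)`, whose terms are
all positive.
-/

open Real Finset

lemma Real.sum_range_le_log_one_add_inv {a : ℝ} (ha : 0 < a) (n : ℕ) :
    ∑ k ∈ range n, 2 * (1 / (2 * k + 1)) * (1 / (2 * a + 1)) ^ (2 * k + 1) ≤ log (1 + a⁻¹) :=
  sum_le_hasSum _ (fun _ _ => by positivity) (hasSum_log_one_add_inv ha)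

lemma lt_log_2846396 : 14.86156405 < log 2846396 := by
  have hsplit : log 2846396 = 21 * log 2 + log (1 + (524288 / 187311)⁻¹) := by
    rw [show (2846396 : ℝ) = 2 ^ 21 * (1 + (524288 / 187311)⁻¹) by norm_num,
      log_mul (by norm_num) (by norm_num), log_pow]
    norm_num
  have hseries := sum_range_le_log_one_add_inv (a := 524288 / 187311) (by norm_num) 4
  norm_num [sum_range_succ] at hseries
  linarith [log_two_gt_d9]

lemma one_add_inv_add_div_sq_div_le {L : ℝ} (hL : 14.86156405 ≤ L) :
    (1 + 1 / L + 2.51 / L ^ 2) / L ≤ 1 / (L - 1.08366) := by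
  have hL0 : 0 < L := by linarith
  have hLd : 0 < L - 1.08366 := by linarith
  rw [div_le_div_iff₀ hL0 hLd]
  field_simp
  nlinarith [sq_nonneg (L - 14.86156405)]

theorem dusart_bound_le_legendre_bound (x : ℝ) (hx : 2846396 ≤ x) :
    x / Real.log x * (1 + 1 / Real.log x + 2.51 / (Real.log x) ^ 2)
      ≤ x / (Real.log x - 1.08366) := by
  have hlog : 14.86156405 ≤ log x :=
    lt_log_2846396.le.trans (log_le_log (by norm_num) hx)
  calc x / log x * (1 + 1 / log x + 2.51 / log x ^ 2)
      = x * ((1 + 1 / log x + 2.51 / log x ^ 2) / log x) := by ring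
    _ ≤ x * (1 / (log x - 1.08366)) :=
      mul_le_mul_of_nonneg_left (one_add_inv_add_div_sq_div_le hlog) (by linarith)
    _ = x / (log x - 1.08366) := by ring
end
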